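/- Let T ∈ ℝ, let a, b, σ be positive real constants, and let g₁, g₂ : (−∞,T] → ℝ be continuous functions with 0 ≤ g₁(t) ≤ g₂(t) for all t ≤ T. Suppose φ₁, φ₂ : (−∞,T] → ℝ are differentiable, satisfy φᵢ′(t) = (σ²/2)·φᵢ(t)² + a·φᵢ(t) − (1 + b·gᵢ(t)) for all t ≤ T (i = 1,2), and 0 ≤ φ₁(T) ≤ φ₂(T). Then φ₁(t) ≤ φ₂(t) for all t ≤ T. -/

import Mathlib

/-!
The difference `u = φ₁ - φ₂` satisfies the linear differential inequality `u' ≥ c u` with the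
continuous coefficient `c = σ²/2 (φ₁ + φ₂) + a`, because `g₁ ≤ g₂` and `b > 0`. Since `u(T) ≤ 0`,
a barrier `ε e^{K (T - t)}` with `K` larger than `-inf c` cannot be crossed going backwards
from `T`, and letting `ε → 0` gives `u ≤ 0`.
-/

open Set

theorem nonpos_of_deriv_right_le_mul_of_pos {f f' : ℝ → ℝ} {a b M : ℝ}
    (hf : ContinuousOn f (Icc a b)) (hf' : ∀ x ∈ Ico a b, HasDerivWithinAt f (f' x) (Ici x) x)
    (ha : f a ≤ 0) (bound : ∀ x ∈ Ico a b, 0 < f x → f' x ≤ M * f x) :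
    ∀ x ∈ Icc a b, f x ≤ 0 := by
  have barrier : ∀ ε > 0, ∀ x ∈ Icc a b, f x ≤ ε * Real.exp ((M + 1) * (x - a)) := by
    intro ε hε x hx
    refine image_le_of_deriv_right_lt_deriv_boundary hf hf' (by simpa using ha.trans hε.le)
      (fun y => ((((hasDerivAt_id y).sub_const a).const_mul (M + 1)).exp.const_mul ε)) ?_ hx
    intro y hy hfy
    have hpos : 0 < f y := hfy ▸ by positivity
    calc f' y ≤ M * f y := bound y hy hpos
      _ < (M + 1) * f y := by linarith
      _ = _ := by rw [hfy]; simp only [id]; ring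
  intro x hx
  by_contra! hfx
  have hE := Real.exp_pos ((M + 1) * (x - a))
  have := barrier (f x / (2 * Real.exp ((M + 1) * (x - a)))) (by positivity) x hx
  rw [div_mul_eq_mul_div, mul_div_mul_right _ _ hE.ne'] at this
  linarith

theorem nonpos_of_mul_le_deriv_left_of_pos {u u' : ℝ → ℝ} {t₀ T m : ℝ}
    (hu : ContinuousOn u (Icc t₀ T)) (hu' : ∀ t ∈ Ioc t₀ T, HasDerivWithinAt u (u' t) (Iic t) t)
    (hT : u T ≤ 0) (bound : ∀ t ∈ Ioc t₀ T, 0 < u t → m * u t ≤ u' t) :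
    ∀ t ∈ Icc t₀ T, u t ≤ 0 := by
  have hrev : ∀ s ∈ Icc 0 (T - t₀), T - s ∈ Icc t₀ T := fun s hs =>
    ⟨by linarith [hs.2], by linarith [hs.1]⟩
  have hrev' : ∀ s ∈ Ico 0 (T - t₀), T - s ∈ Ioc t₀ T := fun s hs =>
    ⟨by linarith [hs.2], by linarith [hs.1]⟩
  have key := nonpos_of_deriv_right_le_mul_of_pos (f := fun s => u (T - s))
    (f' := fun s => -u' (T - s)) (M := -m) (hu.comp (by fun_prop) hrev)
    (fun s hs => ((hu' (T - s) (hrev' s hs)).comp s ((hasDerivWithinAt_id s (Ici s)).const_sub T)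
        (fun r (hr : s ≤ r) => show T - r ≤ T - s by linarith)).congr_deriv (mul_neg_one _))
    (by simpa using hT)
    (fun s hs hpos => by linarith [bound (T - s) (hrev' s hs) hpos])
  intro t ht
  simpa using key (T - t) ⟨by linarith [ht.2], by linarith [ht.1]⟩

theorem riccati_comparison
    (T a b σ : ℝ) (hb : 0 < b)
    (g₁ g₂ : ℝ → ℝ)
    (hg_le : ∀ t ≤ T, g₁ t ≤ g₂ t)
    (φ₁ φ₂ : ℝ → ℝ)
    (hφ₁ : ∀ t ≤ T, HasDerivWithinAt φ₁
      (σ ^ 2 / 2 * (φ₁ t) ^ 2 + a * φ₁ t - (1 + b * g₁ t)) (Set.Iic T) t)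
    (hφ₂ : ∀ t ≤ T, HasDerivWithinAt φ₂
      (σ ^ 2 / 2 * (φ₂ t) ^ 2 + a * φ₂ t - (1 + b * g₂ t)) (Set.Iic T) t)
    (hTle : φ₁ T ≤ φ₂ T) :
    ∀ t ≤ T, φ₁ t ≤ φ₂ t := by
  intro t₀ ht₀
  set c : ℝ → ℝ := fun t => σ ^ 2 / 2 * (φ₁ t + φ₂ t) + a
  have hdiff : ∀ t ≤ T, HasDerivWithinAt (fun t => φ₁ t - φ₂ t)
      (c t * (φ₁ t - φ₂ t) + b * (g₂ t - g₁ t)) (Iic T) t := fun t ht =>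
    ((hφ₁ t ht).sub (hφ₂ t ht)).congr_deriv (by ring)
  have hφ₁c : ContinuousOn φ₁ (Icc t₀ T) := fun t ht =>
    (hφ₁ t ht.2).continuousWithinAt.mono Icc_subset_Iic_self
  have hφ₂c : ContinuousOn φ₂ (Icc t₀ T) := fun t ht =>
    (hφ₂ t ht.2).continuousWithinAt.mono Icc_subset_Iic_self
  obtain ⟨m, hm⟩ : BddBelow (c '' Icc t₀ T) := isCompact_Icc.bddBelow_image (by fun_prop)
  have hu := nonpos_of_mul_le_deriv_left_of_pos (u := fun t => φ₁ t - φ₂ t) (m := m) (hφ₁c.sub hφ₂c)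
    (fun t ht => (hdiff t ht.2).mono (Iic_subset_Iic.2 ht.2)) (sub_nonpos.2 hTle)
    (fun t ht hpos => by
      have hmc : m ≤ c t := hm (mem_image_of_mem c (Ioc_subset_Icc_self ht))
      linarith [mul_le_mul_of_nonneg_right hmc hpos.le,
        mul_nonneg hb.le (sub_nonneg.2 (hg_le t ht.2))])
    t₀ ⟨le_rfl, ht₀⟩
  exact sub_nonpos.1 hu
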